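/- In A(T), for any single element a ∈ G_n and any b ∈ G_m with m ≤ n, the element b is definable from a by an atomic term: b = f_b(f_a(a)); consequently, for a, a* ∈ G_n, the map sending a to a* extends in a unique way to an automorphism of the substructure ⋃_{m≤n} G_m. -/

import Mathlib

open scoped symmDiff

/-- `RankGE succ o x` means the tree rank of `x` (w.r.t. successor relation `succ`)
is at least `o`; unranked nodes (`rk = ∞`) satisfy this for every ordinal. -/
def RankGE {α : Type*} (succ : α → α → Prop) (o : Ordinal) (x : α) : Prop :=
  ∀ β < o, ∃ y, succ x y ∧ RankGE succ β y
termination_by o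

/-- `T` is a subtree of `ω^{<ω}`: closed under initial segments. -/
def IsTree (T : Set (List ℕ)) : Prop := ∀ s t : List ℕ, s <+: t → t ∈ T → s ∈ T

/-- `τ` is an immediate successor of `σ` in `T`. -/
def TSucc (T : Set (List ℕ)) (σ τ : List ℕ) : Prop := τ ∈ T ∧ ∃ k : ℕ, τ = σ ++ [k]

instance : Std.Commutative (α := Finset (List ℕ)) (· ∆ ·) := ⟨fun a b => symmDiff_comm a b⟩
instance : Std.Associative (α := Finset (List ℕ)) (· ∆ ·) := ⟨fun a b c => symmDiff_assoc a b c⟩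

/-- The predecessor map: the symmetric-difference sum of the singletons of the
`T`-predecessors of the members of `a`. -/
def pmap (a : Finset (List ℕ)) : Finset (List ℕ) :=
  Finset.fold (· ∆ ·) ∅ (fun t => {t.dropLast}) a

/-- The carrier `G = ⋃ₙ Gₙ`: an element of `Gₙ` is a pair `(n, a)` with `a` a finite
subset of the level-`n` nodes of `T`; `(n, ∅)` is the identity `idₙ` of `Gₙ`. -/
def Gset (T : Set (List ℕ)) : Set (ℕ × Finset (List ℕ)) :=
  {x | ∀ t ∈ x.2, t ∈ T ∧ t.length = x.1}

/-- The operations `f_a`: `fA a b = a* ∆ b*` where `a*`, `b*` are the iterated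
predecessors of `a`, `b` down to the minimum of their levels. -/
def fA (x y : ℕ × Finset (List ℕ)) : ℕ × Finset (List ℕ) :=
  (min x.1 y.1, (pmap^[x.1 - min x.1 y.1] x.2) ∆ (pmap^[y.1 - min x.1 y.1] y.2))

/-- An automorphism of the structure `A(T) = (G, (f_a)_{a ∈ G})`: a bijection of `G`
commuting with each of the named unary operations `f_a`. -/
def IsAuto (T : Set (List ℕ)) (g : ℕ × Finset (List ℕ) → ℕ × Finset (List ℕ)) : Prop :=
  Set.BijOn g (Gset T) (Gset T) ∧ ∀ a ∈ Gset T, ∀ b ∈ Gset T, g (fA a b) = fA a (g b)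

/-- The substructure `⋃_{m ≤ n} Gₘ`. -/
def GsetLe (T : Set (List ℕ)) (n : ℕ) : Set (ℕ × Finset (List ℕ)) :=
  {x | x ∈ Gset T ∧ x.1 ≤ n}

/-! Under symmetric difference the predecessor map `pmap` is additive, so the operation `fA` is
associative and commutative, and `fA x x = (n, ∅)` is neutral for every `v` of level at most
`n = x.1`; in particular `y = fA y (fA x x)`. Translation `v ↦ fA v (fA x x')` is therefore an
involutive automorphism of `⋃_{m ≤ n} Gₘ` sending `x` to `x'`, and any automorphism `h`
satisfies `h v = h (fA v (fA x x)) = fA v (fA x (h x))`, so it is determined by `h x`. -/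

namespace Finset

variable {α β : Type*} [DecidableEq α] [DecidableEq β]

theorem fold_symmDiff_subset_biUnion (g : α → Finset β) (s : Finset α) :
    s.fold (· ∆ · : Finset β → Finset β → Finset β) ∅ g ⊆ s.biUnion g := by
  induction s using Finset.induction_on with
  | empty => simp
  | insert a s ha ih =>
    rw [fold_insert ha, biUnion_insert]
    exact symmDiff_le_sup.trans (union_subset_union_right ih)

theorem fold_symmDiff_symmDiff (g : α → Finset β) (s t : Finset α) :
    (s ∆ t).fold (· ∆ · : Finset β → Finset β → Finset β) ∅ g
      = s.fold (· ∆ · : Finset β → Finset β → Finset β) ∅ g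
        ∆ t.fold (· ∆ · : Finset β → Finset β → Finset β) ∅ g := by
  let F : Finset α → Finset β := fun s => s.fold (· ∆ ·) ∅ g
  have hunion : F (s ∪ t) = F (s ∆ t) ∆ F (s ∩ t) := by
    have hsplit : s ∪ t = (s ∆ t).disjUnion (s ∩ t) (disjoint_symmDiff_inf s t) := by
      rw [disjUnion_eq_union]; exact (symmDiff_sup_inf s t).symm
    rw [hsplit]
    have h := fold_disjUnion (op := (· ∆ · : Finset β → Finset β → Finset β)) (b₁ := ∅) (b₂ := ∅)
      (f := g) (disjoint_symmDiff_inf s t)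
    rwa [symmDiff_self, bot_eq_empty] at h
  calc F (s ∆ t) = F (s ∆ t) ∆ F (s ∩ t) ∆ F (s ∩ t) :=
      (symmDiff_symmDiff_cancel_right _ _).symm
    _ = F s ∆ F t := by rw [← hunion]; exact fold_union_inter

end Finset

theorem pmap_symmDiff (a b : Finset (List ℕ)) : pmap (a ∆ b) = pmap a ∆ pmap b :=
  Finset.fold_symmDiff_symmDiff _ a b

theorem pmap_iterate_symmDiff (k : ℕ) (a b : Finset (List ℕ)) :
    pmap^[k] (a ∆ b) = pmap^[k] a ∆ pmap^[k] b :=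
  Function.Semiconj₂.iterate pmap_symmDiff k a b

theorem pmap_iterate_empty (k : ℕ) : pmap^[k] ∅ = ∅ :=
  Function.iterate_fixed (f := pmap) (x := ∅) rfl k

section Gset

variable {T : Set (List ℕ)} {k : ℕ} {a b : Finset (List ℕ)}

theorem symmDiff_mem_Gset (ha : (k, a) ∈ Gset T) (hb : (k, b) ∈ Gset T) :
    (k, a ∆ b) ∈ Gset T := fun t ht =>
  (Finset.mem_union.1 (symmDiff_le_sup (α := Finset (List ℕ)) ht)).elim (ha t) (hb t)

theorem pmap_mem_Gset (hT : IsTree T) (ha : (k + 1, a) ∈ Gset T) : (k, pmap a) ∈ Gset T := by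
  intro t ht
  obtain ⟨s, hs, rfl⟩ : ∃ s ∈ a, t = s.dropLast := by
    simpa using Finset.fold_symmDiff_subset_biUnion _ a ht
  obtain ⟨hsT, hs_len⟩ := ha s hs
  exact ⟨hT _ _ (List.dropLast_prefix s) hsT, by simp [hs_len]⟩

theorem iterate_pmap_mem_Gset (hT : IsTree T) (i : ℕ) (ha : (k + i, a) ∈ Gset T) :
    (k, pmap^[i] a) ∈ Gset T := by
  induction i generalizing a with
  | zero => exact ha
  | succ i ih => exact ih (pmap_mem_Gset hT ha)

theorem fA_mem_Gset (hT : IsTree T) {u v : ℕ × Finset (List ℕ)} (hu : u ∈ Gset T)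
    (hv : v ∈ Gset T) : fA u v ∈ Gset T := by
  refine symmDiff_mem_Gset (iterate_pmap_mem_Gset hT _ ?_) (iterate_pmap_mem_Gset hT _ ?_)
  · rwa [Nat.add_sub_cancel' (min_le_left _ _)]
  · rwa [Nat.add_sub_cancel' (min_le_right _ _)]

end Gset

section fA

variable (u v w : ℕ × Finset (List ℕ))

theorem fA_comm : fA u v = fA v u := by
  simp only [fA, min_comm, symmDiff_comm]

theorem fA_assoc : fA (fA u v) w = fA u (fA v w) := by
  simp only [fA, pmap_iterate_symmDiff, ← Function.iterate_add_apply, min_assoc, symmDiff_assoc]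
  congr 4 <;> omega

theorem fA_self : fA u u = (u.1, ∅) := by
  simp [fA]

theorem fA_mk_empty_of_le {n : ℕ} (h : v.1 ≤ n) : fA v (n, ∅) = v := by
  simp only [fA, min_eq_left h, Nat.sub_self, Function.iterate_zero_apply, pmap_iterate_empty]
  rw [← Finset.bot_eq_empty, symmDiff_bot]

end fA

theorem fA_fA_self_of_le {v x : ℕ × Finset (List ℕ)} (h : v.1 ≤ x.1) : fA v (fA x x) = v := by
  rw [fA_self, fA_mk_empty_of_le _ h]

def IsAutoLe (T : Set (List ℕ)) (n : ℕ) (h : ℕ × Finset (List ℕ) → ℕ × Finset (List ℕ)) :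
    Prop :=
  Set.BijOn h (GsetLe T n) (GsetLe T n) ∧
    ∀ u ∈ GsetLe T n, ∀ v ∈ GsetLe T n, h (fA u v) = fA u (h v)

section IsAutoLe

variable {T : Set (List ℕ)} {n : ℕ}

theorem isAutoLe_fA_right (hT : IsTree T) {c : ℕ × Finset (List ℕ)} (hc : c ∈ Gset T)
    (hcn : c.1 = n) : IsAutoLe T n (fun v => fA v c) := by
  have hmaps : Set.MapsTo (fun v => fA v c) (GsetLe T n) (GsetLe T n) := fun v hv =>
    ⟨fA_mem_Gset hT hv.1 hc, (min_le_left _ _).trans hv.2⟩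
  have hinv : Set.LeftInvOn (fun v => fA v c) (fun v => fA v c) (GsetLe T n) := fun v hv =>
    (fA_assoc v c c).trans (fA_fA_self_of_le (hcn ▸ hv.2))
  exact ⟨Set.InvOn.bijOn ⟨hinv, hinv⟩ hmaps hmaps, fun u _ v _ => fA_assoc u v c⟩

theorem IsAutoLe.apply_eq {h : ℕ × Finset (List ℕ) → ℕ × Finset (List ℕ)} (hh : IsAutoLe T n h)
    {x v : ℕ × Finset (List ℕ)} (hx : x ∈ GsetLe T n) (hxn : x.1 = n) (hv : v ∈ GsetLe T n) :
    h v = fA v (fA x (h x)) := by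
  have hid : fA x x ∈ GsetLe T n := by
    rw [fA_self]
    exact ⟨fun t ht => absurd ht (Finset.notMem_empty t), hx.2⟩
  calc h v = h (fA v (fA x x)) := by rw [fA_fA_self_of_le (hxn ▸ hv.2)]
    _ = fA v (h (fA x x)) := hh.2 v hv _ hid
    _ = fA v (fA x (h x)) := by rw [hh.2 x hx x hx]

end IsAutoLe

theorem stmt_10_general (T : Set (List ℕ)) (hT : IsTree T) (n m : ℕ) (hmn : m ≤ n)
    (x y : ℕ × Finset (List ℕ)) (hx : x ∈ Gset T) (hxn : x.1 = n)
    (hym : y.1 = m) :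
    y = fA y (fA x x) ∧
      ∀ x' : ℕ × Finset (List ℕ), x' ∈ Gset T → x'.1 = n →
        ∃ h : ℕ × Finset (List ℕ) → ℕ × Finset (List ℕ),
          (Set.BijOn h (GsetLe T n) (GsetLe T n) ∧
            (∀ u ∈ GsetLe T n, ∀ v ∈ GsetLe T n, h (fA u v) = fA u (h v)) ∧ h x = x') ∧
          ∀ h' : ℕ × Finset (List ℕ) → ℕ × Finset (List ℕ),
            (Set.BijOn h' (GsetLe T n) (GsetLe T n) ∧
              (∀ u ∈ GsetLe T n, ∀ v ∈ GsetLe T n, h' (fA u v) = fA u (h' v)) ∧ h' x = x') →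
            Set.EqOn h' h (GsetLe T n) := by
  refine ⟨(fA_fA_self_of_le (by omega)).symm, fun x' hx' hx'n => ?_⟩
  have hcn : (fA x x').1 = n := by simp [fA, hxn, hx'n]
  obtain ⟨hbij, hcomm⟩ := isAutoLe_fA_right hT (fA_mem_Gset hT hx hx') hcn
  have hfA_x : fA x (fA x x') = x' := by
    rw [← fA_assoc, fA_comm, fA_fA_self_of_le (by omega)]
  refine ⟨fun v => fA v (fA x x'), ⟨hbij, hcomm, hfA_x⟩, ?_⟩
  rintro h' ⟨hbij', hcomm', hh'x⟩ v hv
  rw [IsAutoLe.apply_eq ⟨hbij', hcomm'⟩ ⟨hx, hxn.le⟩ hxn hv, hh'x]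

theorem stmt_10 (T : Set (List ℕ)) (hT : IsTree T) (n m : ℕ) (hmn : m ≤ n)
    (x y : ℕ × Finset (List ℕ)) (hx : x ∈ Gset T) (hxn : x.1 = n)
    (hy : y ∈ Gset T) (hym : y.1 = m) :
    y = fA y (fA x x) ∧
      ∀ x' : ℕ × Finset (List ℕ), x' ∈ Gset T → x'.1 = n →
        ∃ h : ℕ × Finset (List ℕ) → ℕ × Finset (List ℕ),
          (Set.BijOn h (GsetLe T n) (GsetLe T n) ∧
            (∀ u ∈ GsetLe T n, ∀ v ∈ GsetLe T n, h (fA u v) = fA u (h v)) ∧ h x = x') ∧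
          ∀ h' : ℕ × Finset (List ℕ) → ℕ × Finset (List ℕ),
            (Set.BijOn h' (GsetLe T n) (GsetLe T n) ∧
              (∀ u ∈ GsetLe T n, ∀ v ∈ GsetLe T n, h' (fA u v) = fA u (h' v)) ∧ h' x = x') →
            Set.EqOn h' h (GsetLe T n) :=
  stmt_10_general T hT n m hmn x y hx hxn hym
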